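/- Let n ≥ 0 be an integer, let F ∈ K[T] be a nonzero polynomial with deg F < p^n, and let u be a positive integer not divisible by p. Let G be the remainder of the polynomial F((1+T)^u − 1) upon division by the monic polynomial (1+T)^{p^n} − 1. Then G ≠ 0, μ(G) = μ(F), and λ(G) = λ(F). (Consequently the Iwasawa invariants of an element of K[G_n] do not depend on the choice of generator γ_n of the cyclic group G_n.) -/

import Mathlib

open Polynomial

/-- The axioms of the normalized additive valuation `ord_ϖ : K → ℤ` of a discrete
valuation ring `O` with uniformizer `ϖ` and fraction field `K`, recorded on the
nonzero elements of `K`: multiplicativity and the ultrametric inequality. -/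
def IsOrd {K : Type*} [Field K] (v : K → ℤ) : Prop :=
  (∀ x y : K, x ≠ 0 → y ≠ 0 → v (x * y) = v x + v y) ∧
  (∀ x y : K, x ≠ 0 → y ≠ 0 → x + y ≠ 0 → min (v x) (v y) ≤ v (x + y))

/-- The μ-invariant of a (nonzero) polynomial `F = Σ aᵢ Tⁱ` over `K`:
`μ(F) = minᵢ ord_ϖ(aᵢ)`. -/
noncomputable def muInv {K : Type*} [Field K] (v : K → ℤ) (F : Polynomial K) : ℤ :=
  sInf {m : ℤ | ∃ i, F.coeff i ≠ 0 ∧ v (F.coeff i) = m}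

/-- The λ-invariant of a (nonzero) polynomial over `K`:
`λ(F) = min { i : ord_ϖ(aᵢ) = μ(F) }`. -/
noncomputable def lamInv {K : Type*} [Field K] (v : K → ℤ) (F : Polynomial K) : ℕ :=
  sInf {i : ℕ | F.coeff i ≠ 0 ∧ v (F.coeff i) = muInv v F}

/-- `F ∈ O[T]`: all coefficients lie in the valuation ring, i.e. have valuation `≥ 0`. -/
def IntegralPoly {K : Type*} [Field K] (v : K → ℤ) (F : Polynomial K) : Prop :=
  ∀ i, F.coeff i ≠ 0 → 0 ≤ v (F.coeff i)

/-- The residue field `O/(ϖ)` has characteristic `p`, i.e. `p` lies in the maximal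
ideal `(ϖ)` of `O` (equivalently `ord_ϖ(p) ≥ 1`, or `p = 0` in `K`). -/
def ResidueCharP {K : Type*} [Field K] (v : K → ℤ) (p : ℕ) : Prop :=
  (p : K) = 0 ∨ 1 ≤ v (p : K)

/-- `ν_n(T) = Σ_{k=0}^{p-1} (1+T)^{k·p^(n-1)}`, the polynomial representing the
corestriction map `cor_{n-1}^n : K[G_{n-1}] → K[G_n]`. -/
noncomputable def nuPoly (K : Type*) [Field K] (p n : ℕ) : Polynomial K :=
  ∑ k ∈ Finset.range p, (1 + Polynomial.X) ^ (k * p ^ (n - 1))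

section Helpers

variable {K : Type*} [Field K] {v : K → ℤ}

lemma v_one (hv : IsOrd v) : v 1 = 0 := by
  have h := hv.1 1 1 one_ne_zero one_ne_zero
  rw [one_mul] at h; omega

lemma v_neg (hv : IsOrd v) (x : K) : v (-x) = v x := by
  rcases eq_or_ne x 0 with rfl | hx
  · simp
  have h1 : v ((-1 : K) * (-1)) = v (-1) + v (-1) :=
    hv.1 (-1) (-1) (by norm_num) (by norm_num)
  rw [neg_mul_neg, one_mul, v_one hv] at h1
  have h2 := hv.1 (-1) x (by norm_num) hx
  rw [neg_one_mul] at h2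
  omega

lemma v_inv (hv : IsOrd v) {x : K} (hx : x ≠ 0) : v x⁻¹ = -v x := by
  have h := hv.1 x x⁻¹ hx (inv_ne_zero hx)
  rw [mul_inv_cancel₀ hx, v_one hv] at h; omega

lemma v_add_ge (hv : IsOrd v) {x y : K} {c : ℤ} (hx : x = 0 ∨ c ≤ v x)
    (hy : y = 0 ∨ c ≤ v y) : x + y = 0 ∨ c ≤ v (x + y) := by
  rcases hx with rfl | hx
  · simpa using hy
  rcases hy with rfl | hy
  · simp only [add_zero]; right; exact hx
  rcases eq_or_ne (x + y) 0 with h | h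
  · exact Or.inl h
  rcases eq_or_ne x 0 with rfl | hx0
  · simpa using Or.inr hy
  rcases eq_or_ne y 0 with rfl | hy0
  · right; simpa using hx
  exact Or.inr (le_trans (le_min hx hy) (hv.2 x y hx0 hy0 h))

lemma v_sum_ge (hv : IsOrd v) {ι : Type*} (s : Finset ι) (f : ι → K) (c : ℤ)
    (h : ∀ i ∈ s, f i = 0 ∨ c ≤ v (f i)) :
    (∑ i ∈ s, f i) = 0 ∨ c ≤ v (∑ i ∈ s, f i) := by
  classical
  induction s using Finset.induction with
  | empty => simp
  | insert a s' hnot ih =>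
    rw [Finset.sum_insert hnot]
    exact v_add_ge hv (h a (Finset.mem_insert_self a s'))
      (ih fun i hi => h i (Finset.mem_insert_of_mem hi))

lemma v_add_eq (hv : IsOrd v) {x y : K} {c : ℤ} (hx : x ≠ 0) (hc : v x = c)
    (hy : y = 0 ∨ c < v y) : x + y ≠ 0 ∧ v (x + y) = c := by
  rcases eq_or_ne y 0 with rfl | hy0
  · simpa using ⟨hx, hc⟩
  replace hy : c < v y := hy.resolve_left hy0
  have hne : x + y ≠ 0 := by
    intro h
    have hyx : y = -x := eq_neg_of_add_eq_zero_right h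
    rw [hyx, v_neg hv, hc] at hy; omega
  refine ⟨hne, ?_⟩
  have h1 : min (v x) (v y) ≤ v (x + y) := hv.2 x y hx hy0 hne
  rw [hc, min_eq_left (le_of_lt hy)] at h1
  have h2 : min (v (x + y)) (v (-y)) ≤ v x := by
    have h3 := hv.2 (x + y) (-y) hne (neg_ne_zero.2 hy0)
      (by rw [add_neg_cancel_right]; exact hx)
    rwa [add_neg_cancel_right] at h3
  rw [v_neg hv, hc] at h2
  rcases le_total (v (x + y)) (v y) with h | h
  · rw [min_eq_left h] at h2; omega
  · rw [min_eq_right h] at h2; omega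

lemma v_sum_eq (hv : IsOrd v) {ι : Type*} [DecidableEq ι] (s : Finset ι) (f : ι → K)
    (c : ℤ) (i₀ : ι) (hi₀ : i₀ ∈ s) (hne : f i₀ ≠ 0) (hc : v (f i₀) = c)
    (h : ∀ i ∈ s, i ≠ i₀ → f i = 0 ∨ c < v (f i)) :
    (∑ i ∈ s, f i) ≠ 0 ∧ v (∑ i ∈ s, f i) = c := by
  rw [← Finset.add_sum_erase s f hi₀]
  apply v_add_eq hv hne hc
  have h4 := v_sum_ge hv (s.erase i₀) f (c + 1) (fun i hi => by
    rcases h i (Finset.mem_of_mem_erase hi) (Finset.ne_of_mem_erase hi) with h0 | h1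
    · exact Or.inl h0
    · exact Or.inr (by omega))
  rcases h4 with h0 | h1
  · exact Or.inl h0
  · exact Or.inr (by omega)

lemma v_nat (hv : IsOrd v) (m : ℕ) : (m : K) = 0 ∨ 0 ≤ v (m : K) := by
  induction m with
  | zero => simp
  | succ k ih =>
    push_cast
    exact v_add_ge hv (by exact_mod_cast ih) (Or.inr (le_of_eq (v_one hv).symm))

lemma v_int (hv : IsOrd v) (m : ℤ) : (m : K) = 0 ∨ 0 ≤ v (m : K) := by
  rcases Int.natAbs_eq m with h | h
  · rw [h, Int.cast_natCast]; exact v_nat hv m.natAbs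
  · rw [h, Int.cast_neg, Int.cast_natCast]
    rcases v_nat hv m.natAbs with h0 | h1
    · left; rw [h0, neg_zero]
    · right; rw [v_neg hv]; exact h1

lemma v_pow (hv : IsOrd v) {x : K} (hx : x ≠ 0) (e : ℕ) : v (x ^ e) = e * v x := by
  induction e with
  | zero => simpa using v_one hv
  | succ k ih =>
    rw [pow_succ, hv.1 _ _ (pow_ne_zero k hx) hx, ih]
    push_cast; ring

lemma v_unit {p : ℕ} (hv : IsOrd v) (hp : p.Prime) (hres : ResidueCharP v p)
    {m : ℕ} (hm : ¬ p ∣ m) : (m : K) ≠ 0 ∧ v (m : K) = 0 := by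
  have hcop : Nat.Coprime m p := (Nat.Prime.coprime_iff_not_dvd hp |>.mpr hm).symm
  have heuler : m ^ (p - 1) ≡ 1 [MOD p] := by
    have := Nat.ModEq.pow_totient hcop
    rwa [Nat.totient_prime hp] at this
  obtain ⟨t, ht⟩ : (p : ℤ) ∣ (1 : ℤ) - (m ^ (p - 1) : ℕ) := by
    have := heuler.dvd
    exact_mod_cast this
  have hKt : ((m : K)) ^ (p - 1) = 1 + -((p : K) * (t : K)) := by
    have : ((m ^ (p - 1) : ℕ) : ℤ) = 1 - p * t := by omega
    have h2 := congrArg (fun z : ℤ => (z : K)) this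
    push_cast at h2 ⊢
    rw [h2]; ring
  have key : ((m : K)) ^ (p - 1) ≠ 0 ∧ v (((m : K)) ^ (p - 1)) = 0 := by
    rw [hKt]
    apply v_add_eq hv one_ne_zero (v_one hv)
    rcases eq_or_ne ((p : K) * (t : K)) 0 with h0 | h0
    · left; rw [h0, neg_zero]
    have hp0 : (p : K) ≠ 0 := fun h => h0 (by rw [h, zero_mul])
    have ht0 : (t : K) ≠ 0 := fun h => h0 (by rw [h, mul_zero])
    have hres1 : 1 ≤ v (p : K) := hres.resolve_left hp0
    right
    rw [v_neg hv, hv.1 _ _ hp0 ht0]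
    rcases v_int hv t with h' | h'
    · exact absurd h' ht0
    · omega
  have hm0 : (m : K) ≠ 0 := by
    intro h; rw [h, zero_pow (by have := hp.two_le; omega : p - 1 ≠ 0)] at key
    exact key.1 rfl
  refine ⟨hm0, ?_⟩
  have := key.2
  rw [v_pow hv hm0] at this
  have h2 : (p : ℤ) - 1 ≠ 0 := by have := hp.two_le; omega
  have : ((p - 1 : ℕ) : ℤ) * v (m : K) = 0 := this
  have h3 : ((p - 1 : ℕ) : ℤ) ≠ 0 := by have := hp.two_le; omega
  exact (mul_eq_zero.mp this).resolve_left h3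

end Helpers

section MuLam

variable {K : Type*} [Field K] {v : K → ℤ} {F : Polynomial K}

lemma muSet_eq (v : K → ℤ) (F : Polynomial K) :
    {m : ℤ | ∃ i, F.coeff i ≠ 0 ∧ v (F.coeff i) = m} =
      (fun i => v (F.coeff i)) '' (F.support : Set ℕ) := by
  ext m
  simp only [Set.mem_setOf_eq, Set.mem_image, Finset.mem_coe, Polynomial.mem_support_iff]

lemma muSet_finite (v : K → ℤ) (F : Polynomial K) :
    {m : ℤ | ∃ i, F.coeff i ≠ 0 ∧ v (F.coeff i) = m}.Finite := by
  rw [muSet_eq]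
  exact Set.Finite.image _ (F.support.finite_toSet)

lemma muSet_nonempty (hF : F ≠ 0) :
    {m : ℤ | ∃ i, F.coeff i ≠ 0 ∧ v (F.coeff i) = m}.Nonempty := by
  obtain ⟨i, hi⟩ := Polynomial.support_nonempty.mpr hF
  exact ⟨v (F.coeff i), i, Polynomial.mem_support_iff.mp hi, rfl⟩

lemma mu_mem (hF : F ≠ 0) : ∃ i, F.coeff i ≠ 0 ∧ v (F.coeff i) = muInv v F :=
  (muSet_nonempty hF).csInf_mem (muSet_finite v F)

lemma mu_le {i : ℕ} (h : F.coeff i ≠ 0) : muInv v F ≤ v (F.coeff i) :=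
  csInf_le (muSet_finite v F).bddBelow ⟨i, h, rfl⟩

lemma lam_spec (hF : F ≠ 0) :
    F.coeff (lamInv v F) ≠ 0 ∧ v (F.coeff (lamInv v F)) = muInv v F := by
  have h : {i : ℕ | F.coeff i ≠ 0 ∧ v (F.coeff i) = muInv v F}.Nonempty := by
    obtain ⟨i, h1, h2⟩ := mu_mem hF
    exact ⟨i, h1, h2⟩
  exact Nat.sInf_mem h

lemma lam_le {i : ℕ} (h1 : F.coeff i ≠ 0) (h2 : v (F.coeff i) = muInv v F) :
    lamInv v F ≤ i :=
  Nat.sInf_le ⟨h1, h2⟩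

lemma lam_strict {i : ℕ} (hi : i < lamInv v F) (h : F.coeff i ≠ 0) :
    muInv v F < v (F.coeff i) :=
  lt_of_le_of_ne (mu_le h) fun e => absurd (lam_le h e.symm) (not_le.2 hi)

lemma mu_lam_char {c : ℤ} {l : ℕ} (hl : F.coeff l ≠ 0) (hvl : v (F.coeff l) = c)
    (hall : ∀ i, F.coeff i ≠ 0 → c ≤ v (F.coeff i))
    (hstr : ∀ i, i < l → F.coeff i ≠ 0 → c < v (F.coeff i)) :
    muInv v F = c ∧ lamInv v F = l := by
  have hF : F ≠ 0 := fun h => hl (by rw [h]; simp)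
  have hmu : muInv v F = c := by
    have h1 : muInv v F ≤ c := hvl ▸ mu_le hl
    obtain ⟨i, hi1, hi2⟩ := mu_mem hF
    have h2 : c ≤ muInv v F := hi2 ▸ hall i hi1
    omega
  refine ⟨hmu, le_antisymm (lam_le hl (by rw [hvl, hmu])) ?_⟩
  by_contra hcon
  push_neg at hcon
  obtain ⟨h1, h2⟩ := lam_spec hF
  exact absurd (h2.trans hmu) (ne_of_gt (hstr _ hcon h1))

lemma mu_lam_scale (hv : IsOrd v) {c : K} (hc : c ≠ 0) (hF : F ≠ 0) :
    muInv v (Polynomial.C c * F) = v c + muInv v F ∧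
      lamInv v (Polynomial.C c * F) = lamInv v F := by
  obtain ⟨h1, h2⟩ := lam_spec hF
  apply mu_lam_char (c := v c + muInv v F) (l := lamInv v F)
  · rw [Polynomial.coeff_C_mul]; exact mul_ne_zero hc h1
  · rw [Polynomial.coeff_C_mul, hv.1 _ _ hc h1, h2]
  · intro i hi
    rw [Polynomial.coeff_C_mul] at hi ⊢
    have hFi : F.coeff i ≠ 0 := fun h => hi (by rw [h, mul_zero])
    rw [hv.1 _ _ hc hFi]
    have := mu_le (v := v) hFi
    omega
  · intro i hil hi
    rw [Polynomial.coeff_C_mul] at hi ⊢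
    have hFi : F.coeff i ≠ 0 := fun h => hi (by rw [h, mul_zero])
    rw [hv.1 _ _ hc hFi]
    have := lam_strict hil hFi
    omega

end MuLam

section Main

variable {K : Type*} [Field K]

def vSubring (v : K → ℤ) (hv : IsOrd v) : Subring K where
  carrier := {x | x = 0 ∨ 0 ≤ v x}
  zero_mem' := Or.inl rfl
  one_mem' := Or.inr (le_of_eq (v_one hv).symm)
  add_mem' := fun hx hy => v_add_ge hv hx hy
  neg_mem' := fun {x} hx => by
    rcases hx with rfl | hx
    · left; exact neg_zero
    · right; rw [v_neg hv]; exact hx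
  mul_mem' := fun {x y} hx hy => by
    rcases hx with rfl | hx
    · left; rw [zero_mul]
    rcases hy with rfl | hy
    · left; rw [mul_zero]
    rcases eq_or_ne x 0 with rfl | hx0
    · left; rw [zero_mul]
    rcases eq_or_ne y 0 with rfl | hy0
    · left; rw [mul_zero]
    right; rw [hv.1 x y hx0 hy0]; omega

lemma mem_vSubring {v : K → ℤ} {hv : IsOrd v} {x : K} :
    x ∈ vSubring v hv ↔ x = 0 ∨ 0 ≤ v x := Iff.rfl

lemma aux_main (p : ℕ) (hp : p.Prime) (v : K → ℤ) (hv : IsOrd v)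
    (hres : ResidueCharP v p) (n : ℕ) (F : Polynomial K) (hF : F ≠ 0)
    (hdeg : F.degree < (p ^ n : ℕ)) (hmu : muInv v F = 0)
    (u : ℕ) (hu : 0 < u) (hpu : ¬ p ∣ u) (G : Polynomial K)
    (hG : G = (F.comp ((1 + Polynomial.X) ^ u - 1)) %ₘ
        ((1 + Polynomial.X) ^ p ^ n - 1)) :
    G ≠ 0 ∧ muInv v G = 0 ∧ lamInv v G = lamInv v F := by
  classical
  set l := lamInv v F with hl
  set H : Polynomial K := (1 + X) ^ u - 1 with hH
  set N : Polynomial K := (1 + X) ^ p ^ n - 1 with hN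
  set A : Polynomial K := F.comp H with hA
  set ι : ℤ →+* K := Int.castRingHom K with hι
  set Hz : Polynomial ℤ := (1 + X) ^ u - 1 with hHz
  set Nz : Polynomial ℤ := (1 + X) ^ p ^ n - 1 with hNz
  have hHmap : Hz.map ι = H := by
    rw [hHz, hH]; simp [Polynomial.map_sub, Polynomial.map_pow, Polynomial.map_add]
  have hNmap : Nz.map ι = N := by
    rw [hNz, hN]; simp [Polynomial.map_sub, Polynomial.map_pow, Polynomial.map_add]
  -- monicity and degree of N
  have m1 : ((1 : Polynomial K) + X).Monic := by
    rw [add_comm]; simpa using Polynomial.monic_X_add_C (1 : K)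
  have mdeg : ((1 : Polynomial K) + X).natDegree = 1 := by
    rw [add_comm]; simpa using Polynomial.natDegree_X_add_C (1 : K)
  have mpow : (((1 : Polynomial K) + X) ^ p ^ n).Monic := m1.pow _
  have hdegpow : (((1 : Polynomial K) + X) ^ p ^ n).degree = ((p ^ n : ℕ) : WithBot ℕ) := by
    rw [Polynomial.degree_eq_natDegree mpow.ne_zero, m1.natDegree_pow, mdeg, mul_one]
  have hdeg1 : (1 : Polynomial K).degree < (((1 : Polynomial K) + X) ^ p ^ n).degree := by
    rw [Polynomial.degree_one, hdegpow]
    exact_mod_cast pow_pos hp.pos n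
  have hNmonic : N.Monic := mpow.sub_of_left hdeg1
  have hNdeg : N.degree = (p ^ n : ℕ) := by
    rw [hN, Polynomial.degree_sub_eq_left_of_degree_lt hdeg1, hdegpow]
  -- N coefficient bound
  have hNco : ∀ k, k < p ^ n → N.coeff k = 0 ∨ 1 ≤ v (N.coeff k) := by
    intro k hk
    have hco : N.coeff k = ((p ^ n).choose k : K) - (if k = 0 then 1 else 0) := by
      rw [hN, Polynomial.coeff_sub, Polynomial.coeff_one_add_X_pow, Polynomial.coeff_one]
    rcases eq_or_ne k 0 with rfl | hk0
    · left; simp [hco]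
    rw [hco, if_neg hk0, sub_zero]
    obtain ⟨t, ht⟩ := hp.dvd_choose_pow hk0 (Nat.ne_of_lt hk)
    rw [ht]
    push_cast
    rcases eq_or_ne ((p : K) * (t : K)) 0 with h0 | h0
    · left; exact h0
    have hp0 : (p : K) ≠ 0 := fun h => h0 (by rw [h, zero_mul])
    have ht0 : (t : K) ≠ 0 := fun h => h0 (by rw [h, mul_zero])
    right
    rw [hv.1 _ _ hp0 ht0]
    have h1 := hres.resolve_left hp0
    rcases v_nat hv t with h' | h'
    · exact absurd h' ht0
    · omega
  -- Hz facts
  have hHz0 : Hz.coeff 0 = 0 := by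
    rw [hHz, Polynomial.coeff_sub, Polynomial.coeff_one_add_X_pow, Polynomial.coeff_one]
    simp
  obtain ⟨Ez, hEz⟩ := Polynomial.X_dvd_iff.mpr hHz0
  have hEz0 : Ez.coeff 0 = (u : ℤ) := by
    have h1 : Hz.coeff 1 = (u : ℤ) := by
      rw [hHz, Polynomial.coeff_sub, Polynomial.coeff_one_add_X_pow, Polynomial.coeff_one]
      simp
    have h2 := Polynomial.coeff_X_mul Ez 0
    rw [← hEz] at h2
    rw [zero_add] at h2
    rw [h1] at h2
    exact h2.symm
  have hzlt : ∀ e j : ℕ, j < e → (Hz ^ e).coeff j = 0 := by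
    intro e j hj
    rw [hEz, mul_pow, Polynomial.coeff_X_pow_mul', if_neg (not_le.2 hj)]
  have hzeq : ∀ e : ℕ, (Hz ^ e).coeff e = (u : ℤ) ^ e := by
    intro e
    have h3 := Polynomial.coeff_X_pow_mul (Ez ^ e) e 0
    rw [zero_add] at h3
    rw [hEz, mul_pow, h3, Polynomial.coeff_zero_eq_eval_zero, Polynomial.eval_pow,
      ← Polynomial.coeff_zero_eq_eval_zero, hEz0]
  -- A coefficient formula
  have hAco : ∀ j, A.coeff j = ∑ e ∈ F.support, F.coeff e * (((Hz ^ e).coeff j : ℤ) : K) := by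
    intro j
    have h1 : A = ∑ e ∈ F.support, Polynomial.C (F.coeff e) * H ^ e := by
      rw [hA, Polynomial.comp, Polynomial.eval₂_eq_sum, Polynomial.sum_def]
    rw [h1, Polynomial.finset_sum_coeff]
    apply Finset.sum_congr rfl
    intro e _
    rw [Polynomial.coeff_C_mul, ← hHmap, ← Polynomial.map_pow, Polynomial.coeff_map]
    rfl
  -- facts about F
  have hFl : F.coeff l ≠ 0 ∧ v (F.coeff l) = 0 := by
    obtain ⟨h1, h2⟩ := lam_spec hF
    exact ⟨h1, by rw [h2, hmu]⟩
  have hFge : ∀ i, F.coeff i = 0 ∨ 0 ≤ v (F.coeff i) := by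
    intro i
    rcases eq_or_ne (F.coeff i) 0 with h | h
    · exact Or.inl h
    · exact Or.inr (hmu ▸ mu_le h)
  have hFstr : ∀ i, i < l → F.coeff i = 0 ∨ 1 ≤ v (F.coeff i) := by
    intro i hi
    rcases eq_or_ne (F.coeff i) 0 with h | h
    · exact Or.inl h
    · have h2 := lam_strict hi h
      rw [hmu] at h2
      right; omega
  have hlpn : l < p ^ n := by
    have h1 : l ≤ F.natDegree := Polynomial.le_natDegree_of_ne_zero hFl.1
    have h2 : F.natDegree < p ^ n := (Polynomial.natDegree_lt_iff_degree_lt hF).mpr hdeg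
    omega
  have hu0 : (u : K) ≠ 0 ∧ v (u : K) = 0 := v_unit hv hp hres hpu
  -- A at l
  have hAl : A.coeff l ≠ 0 ∧ v (A.coeff l) = 0 := by
    rw [hAco l]
    apply v_sum_eq hv _ _ 0 l (Polynomial.mem_support_iff.mpr hFl.1)
    · rw [hzeq l]
      push_cast
      exact mul_ne_zero hFl.1 (pow_ne_zero l hu0.1)
    · rw [hzeq l]
      push_cast
      rw [hv.1 _ _ hFl.1 (pow_ne_zero l hu0.1), hFl.2, v_pow hv hu0.1, hu0.2]
      ring
    · intro e he hne
      rcases Nat.lt_or_ge e l with helt | hegt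
      · have hae : F.coeff e ≠ 0 := Polynomial.mem_support_iff.mp he
        have h1 : 1 ≤ v (F.coeff e) := (hFstr e helt).resolve_left hae
        rcases eq_or_ne ((((Hz ^ e).coeff l : ℤ) : K)) 0 with h0 | h0
        · left; rw [h0, mul_zero]
        · right
          rw [hv.1 _ _ hae h0]
          rcases v_int hv ((Hz ^ e).coeff l) with h' | h'
          · exact absurd h' h0
          · omega
      · left
        rw [hzlt e l (lt_of_le_of_ne hegt (Ne.symm hne))]
        simp
  -- A below l
  have hAlt : ∀ j, j < l → A.coeff j = 0 ∨ 1 ≤ v (A.coeff j) := by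
    intro j hj
    rw [hAco j]
    apply v_sum_ge hv
    intro e he
    rcases Nat.lt_or_ge j e with h1 | h1
    · left; rw [hzlt e j h1]; simp
    · have hae : F.coeff e ≠ 0 := Polynomial.mem_support_iff.mp he
      have h2 : 1 ≤ v (F.coeff e) := (hFstr e (lt_of_le_of_lt h1 hj)).resolve_left hae
      rcases eq_or_ne ((((Hz ^ e).coeff j : ℤ) : K)) 0 with h0 | h0
      · left; rw [h0, mul_zero]
      · right
        rw [hv.1 _ _ hae h0]
        rcases v_int hv ((Hz ^ e).coeff j) with h' | h'
        · exact absurd h' h0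
        · omega
  have hAint : ∀ j, A.coeff j = 0 ∨ 0 ≤ v (A.coeff j) := by
    intro j
    rw [hAco j]
    apply v_sum_ge hv
    intro e he
    have hae : F.coeff e ≠ 0 := Polynomial.mem_support_iff.mp he
    have h2 : 0 ≤ v (F.coeff e) := (hFge e).resolve_left hae
    rcases eq_or_ne ((((Hz ^ e).coeff j : ℤ) : K)) 0 with h0 | h0
    · left; rw [h0, mul_zero]
    · right
      rw [hv.1 _ _ hae h0]
      rcases v_int hv ((Hz ^ e).coeff j) with h' | h'
      · exact absurd h' h0
      · omega
  -- the quotient q is integral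
  set O : Subring K := vSubring v hv with hO
  have hAc : (↑A.coeffs : Set K) ⊆ O := by
    intro x hx
    obtain ⟨i, _, rfl⟩ := Polynomial.mem_coeffs_iff.mp hx
    exact hAint i
  have hNc : (↑N.coeffs : Set K) ⊆ O := by
    intro x hx
    obtain ⟨i, _, rfl⟩ := Polynomial.mem_coeffs_iff.mp hx
    rw [← hNmap, Polynomial.coeff_map]
    exact v_int hv (Nz.coeff i)
  set q : Polynomial K := A /ₘ N with hqdef
  have hqmap : q = ((A.toSubring O hAc) /ₘ (N.toSubring O hNc)).map O.subtype := by
    rw [Polynomial.map_divByMonic _ ((Polynomial.monic_toSubring _ _ _).mpr hNmonic),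
      Polynomial.map_toSubring, Polynomial.map_toSubring]
  have hqint : ∀ i, q.coeff i = 0 ∨ 0 ≤ v (q.coeff i) := by
    intro i
    rw [hqmap, Polynomial.coeff_map]
    exact (((A.toSubring O hAc) /ₘ (N.toSubring O hNc)).coeff i).2
  -- N * q coefficient bound
  have hNq : ∀ j, j < p ^ n → (N * q).coeff j = 0 ∨ 1 ≤ v ((N * q).coeff j) := by
    intro j hj
    rw [Polynomial.coeff_mul]
    apply v_sum_ge hv
    intro x hx
    have hx1 : x.1 ≤ j := by
      have := Finset.HasAntidiagonal.mem_antidiagonal.mp hx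
      omega
    rcases eq_or_ne (N.coeff x.1) 0 with h0 | h0
    · left; rw [h0, zero_mul]
    rcases eq_or_ne (q.coeff x.2) 0 with h0' | h0'
    · left; rw [h0', mul_zero]
    right
    rw [hv.1 _ _ h0 h0']
    have h1 := (hNco x.1 (lt_of_le_of_lt hx1 hj)).resolve_left h0
    have h2 := (hqint x.2).resolve_left h0'
    omega
  -- G = A - N * q
  have hGsub : ∀ j, G.coeff j = A.coeff j + -((N * q).coeff j) := by
    intro j
    rw [hG, Polynomial.modByMonic_eq_sub_mul_div _ N, Polynomial.coeff_sub]
    ring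
  have hGdeg : ∀ j, p ^ n ≤ j → G.coeff j = 0 := by
    intro j hj
    apply Polynomial.coeff_eq_zero_of_degree_lt
    calc G.degree < N.degree := hG ▸ Polynomial.degree_modByMonic_lt A hNmonic
      _ = (p ^ n : ℕ) := hNdeg
      _ ≤ j := by exact_mod_cast hj
  -- characterize G
  have hGl : G.coeff l ≠ 0 ∧ v (G.coeff l) = 0 := by
    rw [hGsub l]
    apply v_add_eq hv hAl.1 hAl.2
    rcases hNq l hlpn with h | h
    · left; rw [h, neg_zero]
    · right; rw [v_neg hv]; omega
  have hall : ∀ i, G.coeff i ≠ 0 → (0 : ℤ) ≤ v (G.coeff i) := by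
    intro i hi
    rcases Nat.lt_or_ge i (p ^ n) with h | h
    · have h2 : -((N * q).coeff i) = 0 ∨ (0 : ℤ) ≤ v (-((N * q).coeff i)) := by
        rcases hNq i h with h' | h'
        · left; rw [h', neg_zero]
        · right; rw [v_neg hv]; omega
      have h3 := v_add_ge hv (hAint i) h2
      rw [hGsub i] at hi ⊢
      exact h3.resolve_left hi
    · exact absurd (hGdeg i h) hi
  have hstr : ∀ i, i < l → G.coeff i ≠ 0 → (0 : ℤ) < v (G.coeff i) := by
    intro i hil hi
    have h2 : -((N * q).coeff i) = 0 ∨ (1 : ℤ) ≤ v (-((N * q).coeff i)) := by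
      rcases hNq i (lt_trans hil hlpn) with h' | h'
      · left; rw [h', neg_zero]
      · right; rw [v_neg hv]; omega
    have h3 := v_add_ge hv (hAlt i hil) h2
    rw [hGsub i] at hi ⊢
    have := h3.resolve_left hi
    omega
  obtain ⟨hmuG, hlamG⟩ := mu_lam_char hGl.1 hGl.2 hall hstr
  exact ⟨fun h => hGl.1 (by rw [h, Polynomial.coeff_zero]), hmuG, hlamG⟩

end Main

/-- The Iwasawa invariants of an element of K[G_n] do not depend on the choice
of generator: replacing γ by γ^u (with p ∤ u, u > 0) corresponds to the
substitution T ↦ (1+T)^u − 1 followed by reduction mod (1+T)^(p^n) − 1, and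
this preserves μ and λ. -/
theorem invariants_independent_of_generator
    {K : Type*} [Field K] (p : ℕ) (hp : p.Prime)
    (v : K → ℤ) (hv : IsOrd v) (hres : ResidueCharP v p)
    (n : ℕ) (F : Polynomial K) (hF : F ≠ 0) (hdeg : F.degree < (p ^ n : ℕ))
    (u : ℕ) (hu : 0 < u) (hpu : ¬ p ∣ u)
    (G : Polynomial K)
    (hG : G = (F.comp ((1 + Polynomial.X) ^ u - 1)) %ₘ
        ((1 + Polynomial.X) ^ p ^ n - 1)) :
    G ≠ 0 ∧ muInv v G = muInv v F ∧ lamInv v G = lamInv v F := by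
  obtain ⟨hl1, hl2⟩ := lam_spec (v := v) hF
  set c : K := (F.coeff (lamInv v F))⁻¹ with hc
  have hc0 : c ≠ 0 := inv_ne_zero hl1
  have hvc : v c = -(muInv v F) := by rw [hc, v_inv hv hl1, hl2]
  set F' : Polynomial K := Polynomial.C c * F with hF'def
  have hF' : F' ≠ 0 := mul_ne_zero (Polynomial.C_ne_zero.mpr hc0) hF
  obtain ⟨hmuF', hlamF'⟩ := mu_lam_scale hv hc0 hF
  have hmu0 : muInv v F' = 0 := by rw [hmuF', hvc]; ring
  have hdeg' : F'.degree < (p ^ n : ℕ) := by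
    rw [hF'def, Polynomial.degree_mul, Polynomial.degree_C hc0, zero_add]
    exact hdeg
  have hG' : Polynomial.C c * G = (F'.comp ((1 + Polynomial.X) ^ u - 1)) %ₘ
      ((1 + Polynomial.X) ^ p ^ n - 1) := by
    rw [hF'def, Polynomial.mul_comp, Polynomial.C_comp, hG,
      ← Polynomial.smul_eq_C_mul, ← Polynomial.smul_eq_C_mul, Polynomial.smul_modByMonic]
  obtain ⟨hG'0, hmuG', hlamG'⟩ :=
    aux_main p hp v hv hres n F' hF' hdeg' hmu0 u hu hpu (Polynomial.C c * G) hG'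
  have hGne : G ≠ 0 := by
    rintro rfl
    rw [mul_zero] at hG'0
    exact hG'0 rfl
  obtain ⟨hmuscaleG, hlamscaleG⟩ := mu_lam_scale hv hc0 hGne
  refine ⟨hGne, ?_, ?_⟩
  · rw [hmuscaleG, hvc] at hmuG'
    omega
  · rw [hlamscaleG] at hlamG'
    rw [hlamG', hlamF']
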